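/- arXiv:2410.00901 — 3 statements merged into one kernel-verified Lean document; each statement's English description precedes it below -/
import Mathlib

section
/- For a connected, locally finite, infinite graph Γ, the set E_ℓ(Γ) of ends accumulated by loops is a closed subset of the end space E(Γ). -/
open TopologicalSpace

/-- A based (multi)graph with vertex set `ℕ` and edge set `ℕ`: each edge is an
unordered pair of vertices (self-loops and multiple edges allowed), with a basepoint. -/
structure BasedGraph where
  edges : ℕ → Sym2 ℕ
  base : ℕ

namespace BasedGraph

/-- Two vertices are adjacent if some edge joins them. -/
def Adj (G : BasedGraph) (u v : ℕ) : Prop := ∃ e : ℕ, G.edges e = s(u, v)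

/-- There is a walk of length `n` from `u` to `v`. -/
def ReachesIn (G : BasedGraph) (n u v : ℕ) : Prop :=
  ∃ f : ℕ → ℕ, f 0 = u ∧ f n = v ∧ ∀ i < n, G.Adj (f i) (f (i + 1))

/-- Connectedness: every pair of vertices is joined by a walk. -/
def Connected (G : BasedGraph) : Prop := ∀ u v : ℕ, ∃ n, G.ReachesIn n u v

/-- Local finiteness: each vertex meets only finitely many edges. -/
def LocallyFinite (G : BasedGraph) : Prop := ∀ v : ℕ, {e : ℕ | v ∈ G.edges e}.Finite

/-- Degree of a vertex: incident edges, with self-loops counted twice. -/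
noncomputable def degree (G : BasedGraph) (v : ℕ) : ℕ :=
  {e : ℕ | v ∈ G.edges e}.ncard + {e : ℕ | G.edges e = s(v, v)}.ncard

/-- `k`-regular: locally finite with every vertex of degree exactly `k`. -/
def Regular (G : BasedGraph) (k : ℕ) : Prop := G.LocallyFinite ∧ ∀ v, G.degree v = k

/-- Path metric distance (length of a shortest walk). -/
noncomputable def dist (G : BasedGraph) (u v : ℕ) : ℕ := sInf {n | G.ReachesIn n u v}

/-- Vertices of the ball of radius `r` around the basepoint. -/
def ballV (G : BasedGraph) (r : ℕ) : Set ℕ := {v | G.dist G.base v ≤ r}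

/-- Edges of the ball of radius `r`: both endpoints lie in the vertex ball. -/
def ballE (G : BasedGraph) (r : ℕ) : Set ℕ := {e | ∀ v ∈ G.edges e, v ∈ G.ballV r}

/-- The balls of radius `r` around the basepoints of `G₁`, `G₂` are isomorphic
as based graphs. -/
def BallIso (r : ℕ) (G₁ G₂ : BasedGraph) : Prop :=
  ∃ (σ : G₁.ballV r ≃ G₂.ballV r) (τ : G₁.ballE r ≃ G₂.ballE r),
    (∀ h₁ : G₁.base ∈ G₁.ballV r, (σ ⟨G₁.base, h₁⟩ : ℕ) = G₂.base) ∧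
    ∀ (e : G₁.ballE r) (u v : ℕ) (hu : u ∈ G₁.ballV r) (hv : v ∈ G₁.ballV r),
      G₁.edges ↑e = s(u, v) →
        G₂.edges ↑(τ e) = s((σ ⟨u, hu⟩ : ℕ), (σ ⟨v, hv⟩ : ℕ))

/-- Based isomorphism of graphs. -/
def Iso (G₁ G₂ : BasedGraph) : Prop :=
  ∃ (σ : ℕ ≃ ℕ) (τ : ℕ ≃ ℕ), σ G₁.base = G₂.base ∧
    ∀ e : ℕ, G₂.edges (τ e) = Sym2.map σ (G₁.edges e)

/-- `d(Γ₁,Γ₂) = inf { 2^{-r} : B_r(Γ₁) ≅ B_r(Γ₂) }` (with `1 = 2⁻⁰` as default cap). -/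
noncomputable def gdist (G₁ G₂ : BasedGraph) : ℝ :=
  sInf (insert 1 {x : ℝ | ∃ r : ℕ, BallIso r G₁ G₂ ∧ x = (2 : ℝ)⁻¹ ^ r})

/-- Reachability by a walk avoiding a set `S` of vertices. -/
def ReachAvoid (G : BasedGraph) (S : Set ℕ) (u v : ℕ) : Prop :=
  ∃ (n : ℕ) (f : ℕ → ℕ), f 0 = u ∧ f n = v ∧ (∀ i ≤ n, f i ∉ S) ∧
    ∀ i < n, G.Adj (f i) (f (i + 1))

/-- The end space of `G`: inverse limit over finite (= compact) subgraphs of the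
(discrete, finite) sets of connected components of the complement; a point assigns
to each finite vertex set `S` (the characteristic function of) a connected component
of `G ∖ S`, compatibly. -/
def EndSpace (G : BasedGraph) : Type :=
  {e : Finset ℕ → ℕ → Bool //
    (∀ S : Finset ℕ, ∃ v ∉ (S : Set ℕ), ∀ w, e S w = true ↔ G.ReachAvoid (↑S) v w) ∧
    ∀ S T : Finset ℕ, S ⊆ T → ∀ w, e T w = true → e S w = true}

instance (G : BasedGraph) : TopologicalSpace (EndSpace G) :=
  inferInstanceAs (TopologicalSpace
    {e : Finset ℕ → ℕ → Bool //
    (∀ S : Finset ℕ, ∃ v ∉ (S : Set ℕ), ∀ w, e S w = true ↔ G.ReachAvoid (↑S) v w) ∧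
    ∀ S T : Finset ℕ, S ⊆ T → ∀ w, e T w = true → e S w = true})

/-- The (induced subgraph on) `A` has first Betti number (rank) at least `n`:
some finite subgraph `(VF, EF)` inside `A` has `#EF - #VF + 1 ≥ n`. -/
def RankGe (G : BasedGraph) (A : Set ℕ) (n : ℕ) : Prop :=
  ∃ VF EF : Finset ℕ, (↑VF : Set ℕ) ⊆ A ∧
    (∀ e ∈ EF, ∀ v, v ∈ G.edges e → v ∈ VF) ∧ VF.card + n ≤ EF.card + 1

/-- An end is accumulated by loops if each of its neighborhoods has infinite rank. -/
def AccumulatedByLoops (G : BasedGraph) (e : EndSpace G) : Prop :=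
  ∀ S : Finset ℕ, ∀ n : ℕ, RankGe G {w | e.1 S w = true} n

/-- One-ended: the end space is a single point. -/
def OneEnded (G : BasedGraph) : Prop :=
  Nonempty (EndSpace G) ∧ ∀ e₁ e₂ : EndSpace G, e₁ = e₂

/-- Any two vertices at distance exactly `n` from the basepoint are joined by a
path avoiding the open ball of radius `n`. -/
def OutsideConnected (G : BasedGraph) (n : ℕ) : Prop :=
  ∀ u v : ℕ, G.dist G.base u = n → G.dist G.base v = n →
    G.ReachAvoid {w | G.dist G.base w < n} u v

end BasedGraph

open BasedGraph

/-- The space `𝒢_k` of based, connected, infinite (vertex set `ℕ`), `k`-regular graphs. -/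
def Gspace (k : ℕ) : Type := {G : BasedGraph // G.Connected ∧ G.Regular k}

/-- The metric topology on `𝒢_k`, generated by the metric balls of `gdist`. -/
instance (k : ℕ) : TopologicalSpace (Gspace k) :=
  generateFrom {U | ∃ (Γ : Gspace k) (ε : ℝ), 0 < ε ∧ U = {Δ | gdist Γ.1 Δ.1 < ε}}


lemma BasedGraph.Adj.symm' {G : BasedGraph} {u v : ℕ} (h : G.Adj u v) : G.Adj v u := by
  obtain ⟨e, he⟩ := h
  exact ⟨e, by rw [he, Sym2.eq_swap]⟩

lemma BasedGraph.ReachAvoid.symm' {G : BasedGraph} {S : Set ℕ} {u v : ℕ}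
    (h : G.ReachAvoid S u v) : G.ReachAvoid S v u := by
  obtain ⟨n, f, h0, hn, havoid, hadj⟩ := h
  refine ⟨n, fun i => f (n - i), by simpa using hn, by simpa using h0,
    fun i _ => havoid _ (Nat.sub_le _ _), fun i hi => ?_⟩
  have h1 : n - i = (n - (i + 1)) + 1 := by omega
  show G.Adj (f (n - i)) (f (n - (i + 1)))
  rw [h1]
  exact (hadj (n - (i + 1)) (by omega)).symm'

lemma BasedGraph.ReachAvoid.trans' {G : BasedGraph} {S : Set ℕ} {u v w : ℕ}
    (h1 : G.ReachAvoid S u v) (h2 : G.ReachAvoid S v w) : G.ReachAvoid S u w := by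
  obtain ⟨n, f, hf0, hfn, hfa, hfadj⟩ := h1
  obtain ⟨m, g, hg0, hgm, hga, hgadj⟩ := h2
  refine ⟨n + m, fun i => if i < n then f i else g (i - n), ?_, ?_, ?_, ?_⟩
  · by_cases h : 0 < n
    · simp [h, hf0]
    · have : n = 0 := by omega
      subst this
      simp only [Nat.lt_irrefl, if_false, Nat.sub_zero, hg0]
      rw [← hf0, ← hfn]
  · have : ¬ (n + m < n) := by omega
    simp [this, hgm]
  · intro i _
    by_cases h : i < n
    · simp only [h, if_true]; exact hfa i (le_of_lt h)
    · simp only [h, if_false]; exact hga (i - n) (by omega)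
  · intro i hi
    by_cases h : i + 1 < n
    · have h' : i < n := by omega
      simp only [h, h', if_true]
      exact hfadj i h'
    · by_cases h' : i < n
      · have hn' : i + 1 = n := by omega
        simp only [h', if_true, hn', lt_irrefl, if_false]
        have hgf : g (n - n) = f n := by rw [Nat.sub_self, hg0, hfn]
        rw [hgf, ← hn']
        exact hfadj i h'
      · simp only [h, h', if_false]
        have h2 : i + 1 - n = (i - n) + 1 := by omega
        rw [h2]
        exact hgadj (i - n) (by omega)

/-- the set of ends accumulated by loops is closed in the end space. -/
theorem endsAccumulatedByLoops_isClosed (G : BasedGraph)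
    (hconn : G.Connected) (hlf : G.LocallyFinite) :
    IsClosed {e : EndSpace G | AccumulatedByLoops G e} := by
  rw [← isOpen_compl_iff]
  rw [isOpen_iff_mem_nhds]
  intro e he
  simp only [Set.mem_compl_iff, Set.mem_setOf_eq, AccumulatedByLoops] at he
  push_neg at he
  obtain ⟨S, n, hfail⟩ := he
  obtain ⟨v, hvS, hv⟩ := e.2.1 S
  have hvtrue : e.1 S v = true :=
    (hv v).2 ⟨0, fun _ => v, rfl, rfl, fun i hi => by simpa using hvS, fun i hi => by omega⟩
  have hUopen : IsOpen {e' : EndSpace G | e'.1 S v = true} := by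
    have hc : Continuous fun e' : EndSpace G => e'.1 S v :=
      (continuous_apply v).comp ((continuous_apply S).comp continuous_subtype_val)
    exact hc.isOpen_preimage {true} (isOpen_discrete _)
  refine mem_nhds_iff.2 ⟨_, ?_, hUopen, hvtrue⟩
  intro e' he'v
  simp only [Set.mem_setOf_eq] at he'v
  simp only [Set.mem_compl_iff, Set.mem_setOf_eq, AccumulatedByLoops]
  push_neg
  refine ⟨S, n, ?_⟩
  have hsets : {w | e'.1 S w = true} = {w | e.1 S w = true} := by
    obtain ⟨v', hv'S, hv'⟩ := e'.2.1 S
    have hreach : G.ReachAvoid (↑S) v' v := (hv' v).1 he'v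
    ext w
    simp only [Set.mem_setOf_eq]
    rw [hv' w, hv w]
    constructor
    · intro h; exact hreach.symm'.trans' h
    · intro h; exact hreach.trans' h
  rw [hsets]
  exact hfail
end

section
/- For every nonempty closed subset C of the Cantor space 2^ℕ, there exists a connected, infinite, 3-regular graph Γ_C such that the end space E(Γ_C) is homeomorphic to C and every end of Γ_C is accumulated by loops, i.e., E_ℓ(Γ_C) = E(Γ_C). -/
open TopologicalSpace

open BasedGraph

/-!
Let `T` be the tree of finite prefixes of points of `C`; since `C` is closed, `C` is exactly the
set of branches of `T`. Replace every node of `T` by a triangle whose two free corners lead to the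
two children, and where a child is missing attach instead a single vertex carrying a loop; the
result is connected and 3-regular. Deleting the finitely many vertices of depth at most `m` leaves
exactly one piece below each node of length `m`, so an end, which picks one piece for every `m`
compatibly, is the same as a branch of `T`. Every neighbourhood of an end contains the triangles
of all deep enough nodes of its branch, strung together, hence has infinite rank.
-/

namespace BasedGraph

section Walks

variable {G : BasedGraph} {S S' : Set ℕ} {u v w : ℕ}

theorem Adj.symm (h : G.Adj u v) : G.Adj v u := by
  obtain ⟨e, he⟩ := h
  exact ⟨e, he.trans Sym2.eq_swap⟩

def AdjOff (G : BasedGraph) (S : Set ℕ) (u v : ℕ) : Prop := u ∉ S ∧ v ∉ S ∧ G.Adj u v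

instance : Std.Symm (G.AdjOff S) := ⟨fun _ _ h => ⟨h.2.1, h.1, h.2.2.symm⟩⟩

theorem ReachAvoid.refl (h : u ∉ S) : G.ReachAvoid S u u :=
  ⟨0, fun _ => u, rfl, rfl, fun _ _ => h, fun _ h => absurd h (Nat.not_lt_zero _)⟩

theorem ReachAvoid.tail (h : G.ReachAvoid S u v) (hvw : G.AdjOff S v w) :
    G.ReachAvoid S u w := by
  obtain ⟨n, f, rfl, rfl, hS, hadj⟩ := h
  refine ⟨n + 1, fun i => if i ≤ n then f i else w, by simp, by simp, fun i hi => ?_,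
    fun i hi => ?_⟩
  · by_cases hin : i ≤ n
    · simpa [hin] using hS i hin
    · simpa [hin] using hvw.2.1
  · rcases Nat.lt_succ_iff_lt_or_eq.1 hi with hi | rfl
    · simpa [hi.le, Nat.succ_le_of_lt hi] using hadj i hi
    · simpa using hvw.2.2

theorem reachAvoid_iff :
    G.ReachAvoid S u v ↔ u ∉ S ∧ Relation.ReflTransGen (G.AdjOff S) u v := by
  constructor
  · rintro ⟨n, f, rfl, rfl, hS, hadj⟩
    refine ⟨hS 0 n.zero_le, ?_⟩
    induction n with
    | zero => rfl
    | succ n ih =>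
      exact (ih (fun i hi => hS i (hi.trans n.le_succ))
        fun i hi => hadj i (hi.trans n.lt_succ_self)).tail
        ⟨hS n n.le_succ, hS (n + 1) le_rfl, hadj n n.lt_succ_self⟩
  · rintro ⟨hu, h⟩
    induction h with
    | refl => exact .refl hu
    | tail _ hvw ih => exact ih.tail hvw

theorem ReachAvoid.notMem_left (h : G.ReachAvoid S u v) : u ∉ S := (reachAvoid_iff.1 h).1

theorem ReachAvoid.notMem_right (h : G.ReachAvoid S u v) : v ∉ S := by
  obtain ⟨n, f, -, rfl, hS, -⟩ := h
  exact hS n le_rfl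

theorem ReachAvoid.trans (h₁ : G.ReachAvoid S u v) (h₂ : G.ReachAvoid S v w) :
    G.ReachAvoid S u w :=
  reachAvoid_iff.2 ⟨h₁.notMem_left, (reachAvoid_iff.1 h₁).2.trans (reachAvoid_iff.1 h₂).2⟩

theorem ReachAvoid.symm (h : G.ReachAvoid S u v) : G.ReachAvoid S v u :=
  reachAvoid_iff.2 ⟨h.notMem_right, _root_.symm (reachAvoid_iff.1 h).2⟩

theorem ReachAvoid.mono (hS : S ⊆ S') (h : G.ReachAvoid S' u v) : G.ReachAvoid S u v := by
  obtain ⟨hu, h⟩ := reachAvoid_iff.1 h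
  exact reachAvoid_iff.2 ⟨fun h => hu (hS h), Relation.ReflTransGen.mono
    (fun _ _ ⟨ha, hb, hab⟩ => ⟨fun h => ha (hS h), fun h => hb (hS h), hab⟩) _ _ h⟩

theorem ReachAvoid.of_adj (h : G.Adj u v) (hu : u ∉ S) (hv : v ∉ S) : G.ReachAvoid S u v :=
  (ReachAvoid.refl hu).tail ⟨hu, hv, h⟩

theorem connected_of_reachAvoid (h : ∀ u v, G.ReachAvoid ∅ u v) : G.Connected := fun u v =>
  let ⟨n, f, h0, hn, _, hadj⟩ := h u v
  ⟨n, f, h0, hn, hadj⟩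

end Walks

theorem EndSpace.continuous_apply {G : BasedGraph} (S : Finset ℕ) (w : ℕ) :
    Continuous fun e : EndSpace G => e.1 S w :=
  (_root_.continuous_apply w).comp ((_root_.continuous_apply S).comp continuous_subtype_val)

theorem EndSpace.apply_eq_true_iff {G : BasedGraph} (e : EndSpace G) {S : Finset ℕ} {u : ℕ}
    (hu : e.1 S u = true) (w : ℕ) : e.1 S w = true ↔ G.ReachAvoid S u w := by
  obtain ⟨v, -, hv⟩ := e.2.1 S
  rw [hv] at hu ⊢
  exact ⟨hu.symm.trans, hu.trans⟩

section OfEquiv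

variable {V E : Type*}

def ofEquiv (σ : V ≃ ℕ) (τ : E ≃ ℕ) (ends : E → V × V) (v₀ : V) : BasedGraph where
  edges n := s(σ (ends (τ.symm n)).1, σ (ends (τ.symm n)).2)
  base := σ v₀

variable {σ : V ≃ ℕ} {τ : E ≃ ℕ} {ends : E → V × V} {v₀ : V}

theorem ofEquiv_edges_apply (e : E) :
    (ofEquiv σ τ ends v₀).edges (τ e) = s(σ (ends e).1, σ (ends e).2) := by
  simp [ofEquiv]

theorem ofEquiv_adj (e : E) : (ofEquiv σ τ ends v₀).Adj (σ (ends e).1) (σ (ends e).2) :=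
  ⟨τ e, ofEquiv_edges_apply e⟩

theorem ReachAvoid.apply_eq_of_ofEquiv {α : Type*} {f : V → α} {S : Set ℕ}
    (hf : ∀ e, σ (ends e).1 ∉ S → σ (ends e).2 ∉ S → f (ends e).1 = f (ends e).2)
    {a b : V} (h : (ofEquiv σ τ ends v₀).ReachAvoid S (σ a) (σ b)) : f a = f b := by
  suffices ∀ n, Relation.ReflTransGen ((ofEquiv σ τ ends v₀).AdjOff S) (σ a) n →
      f a = f (σ.symm n) by simpa using this _ (reachAvoid_iff.1 h).2
  intro n hn
  induction hn with
  | refl => simp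
  | @tail x y _ hxy ih =>
    obtain ⟨hx, hy, n, hn⟩ := hxy
    rw [← τ.apply_symm_apply n, ofEquiv_edges_apply, Sym2.eq_iff] at hn
    have key := hf (τ.symm n)
    rcases hn with ⟨rfl, rfl⟩ | ⟨rfl, rfl⟩
    · simpa [ih] using key hx hy
    · simpa [ih] using (key hy hx).symm

/-- Degrees count half-edges: a loop at `v` lies in both sets below. -/
theorem ofEquiv_regular {k : ℕ}
    (h : ∀ v, {e | (ends e).1 = v}.encard + {e | (ends e).2 = v}.encard = k) :
    (ofEquiv σ τ ends v₀).Regular k := by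
  have hinc (v : V) : {n | σ v ∈ (ofEquiv σ τ ends v₀).edges n} =
      τ '' ({e | (ends e).1 = v} ∪ {e | (ends e).2 = v}) := by
    ext n
    simp [ofEquiv, Equiv.image_eq_preimage_symm, eq_comm]
  have hloop (v : V) : {n | (ofEquiv σ τ ends v₀).edges n = s(σ v, σ v)} =
      τ '' ({e | (ends e).1 = v} ∩ {e | (ends e).2 = v}) := by
    ext n
    simp [ofEquiv, Equiv.image_eq_preimage_symm]
  have hfin (v : V) : {e | (ends e).1 = v}.Finite ∧ {e | (ends e).2 = v}.Finite :=
    ⟨Set.finite_of_encard_le_coe (h v ▸ le_self_add),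
      Set.finite_of_encard_le_coe (h v ▸ le_add_self)⟩
  refine ⟨fun n => ?_, fun n => ?_⟩ <;> rw [← σ.apply_symm_apply n]
  · exact hinc _ ▸ ((hfin _).1.union (hfin _).2).image τ
  · rw [degree, hinc, hloop, Set.ncard_image_of_injective _ τ.injective,
      Set.ncard_image_of_injective _ τ.injective,
      Set.ncard_union_add_ncard_inter _ _ (hfin _).1 (hfin _).2, ← Nat.cast_inj (R := ℕ∞),
      Nat.cast_add, (hfin _).1.cast_ncard_eq, (hfin _).2.cast_ncard_eq, h]

theorem ofEquiv_rankGe {ι κ : Type*} [Fintype ι] [Fintype κ] {A : Set ℕ} {n : ℕ}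
    {f : ι → V} {g : κ → E} (hf : f.Injective) (hg : g.Injective)
    (hfA : ∀ i, σ (f i) ∈ A)
    (hgf : ∀ k, (ends (g k)).1 ∈ Set.range f ∧ (ends (g k)).2 ∈ Set.range f)
    (hcard : Fintype.card ι + n ≤ Fintype.card κ + 1) :
    (ofEquiv σ τ ends v₀).RankGe A n := by
  classical
  refine ⟨Finset.univ.image (σ ∘ f), Finset.univ.image (τ ∘ g), ?_, ?_, ?_⟩
  · simpa [Set.subset_def] using hfA
  · simp only [Finset.mem_image, Finset.mem_univ, true_and, Function.comp_apply]
    rintro _ ⟨k, rfl⟩ v hv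
    rw [ofEquiv_edges_apply, Sym2.mem_iff] at hv
    obtain ⟨⟨i, hi⟩, ⟨j, hj⟩⟩ := hgf k
    rcases hv with rfl | rfl
    exacts [⟨i, by rw [hi]⟩, ⟨j, by rw [hj]⟩]
  · rwa [Finset.card_image_of_injective _ (σ.injective.comp hf),
      Finset.card_image_of_injective _ (τ.injective.comp hg), Finset.card_univ, Finset.card_univ]

end OfEquiv

end BasedGraph

open PiNat

theorem List.rtake_cons_of_le {α : Type*} (a : α) {l : List α} {n : ℕ} (h : n ≤ l.length) :
    (a :: l).rtake n = l.rtake n := by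
  simp only [List.rtake, List.length_cons, Nat.sub_add_comm h, List.drop_succ_cons]

theorem List.rtake_of_length_eq {α : Type*} {l : List α} {n : ℕ} (h : l.length = n) :
    l.rtake n = l := by
  simp [List.rtake, h]

theorem PiNat.rtake_res {α : Type*} (x : ℕ → α) {a b : ℕ} (h : a ≤ b) :
    (res x b).rtake a = res x a := by
  induction b, h using Nat.le_induction with
  | base => exact List.rtake_of_length_eq (res_length x a)
  | succ b hab ih => rwa [res_succ, List.rtake_cons_of_le _ (by rwa [res_length])]

theorem PiNat.res_injective_right {α : Type*} (x : ℕ → α) : Function.Injective (res x) :=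
  fun a b h => by simpa using congrArg List.length h

namespace TreeGraph

/-- The node `s` of a tree `T` becomes the triangle `hub s`, `port s false`, `port s true`; the
port `port s b` is joined to `hub (b :: s)`, or, if `b :: s ∉ T`, to a vertex `cap s b` carrying
a loop. The base vertex carries a loop and is joined to `hub []`. -/
inductive Vert (T : Set (List Bool)) : Type
  | base
  | hub (s : List Bool) (hs : s ∈ T)
  | port (s : List Bool) (b : Bool) (hs : s ∈ T)
  | cap (s : List Bool) (b : Bool) (hs : s ∈ T) (hb : b :: s ∉ T)

inductive Edge (T : Set (List Bool)) : Type
  | baseLoop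
  | root (h : [] ∈ T)
  | spoke (s : List Bool) (b : Bool) (hs : s ∈ T)
  | rim (s : List Bool) (hs : s ∈ T)
  | down (s : List Bool) (b : Bool) (hs : s ∈ T)
  | capLoop (s : List Bool) (b : Bool) (hs : s ∈ T) (hb : b :: s ∉ T)
  deriving Countable

/-- Words are read from right to left, as for `PiNat.res`: the parent of `b :: s` is `s`. -/
def IsTree (T : Set (List Bool)) : Prop := ∀ ⦃b s⦄, b :: s ∈ T → s ∈ T

variable {T : Set (List Bool)}

theorem drop_mem (hT : IsTree T) : ∀ (k : ℕ) {s : List Bool}, s ∈ T → s.drop k ∈ T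
  | 0, _, hs => hs
  | _ + 1, [], hs => hs
  | k + 1, _ :: _, hs => drop_mem hT k (hT hs)

theorem rtake_mem (hT : IsTree T) {s : List Bool} (hs : s ∈ T) (m : ℕ) : s.rtake m ∈ T :=
  drop_mem hT _ hs

instance [Infinite T] : Infinite (Edge T) :=
  Infinite.of_injective (fun s : T => Edge.rim s.1 s.2) fun _ _ h => Subtype.ext (Edge.rim.inj h)

namespace Vert

def node : Vert T → List Bool
  | base => []
  | hub s _ => s
  | port s _ _ => s
  | cap s _ _ _ => s

def level : Vert T → ℕ
  | base => 0
  | hub s _ => s.length + 1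
  | port s _ _ => s.length + 1
  | cap s _ _ _ => s.length + 1

def encode : Vert T → List Bool × Fin 6
  | base => ([], 0)
  | hub s _ => (s, 1)
  | port s b _ => (s, bif b then 2 else 3)
  | cap s b _ _ => (s, bif b then 4 else 5)

theorem encode_injective : (encode : Vert T → _).Injective := by
  rintro (_ | ⟨s, _⟩ | ⟨s, _ | _, _⟩ | ⟨s, _ | _, _, _⟩)
    (_ | ⟨t, _⟩ | ⟨t, _ | _, _⟩ | ⟨t, _ | _, _, _⟩) h <;> simp_all [encode]

instance : Countable (Vert T) := encode_injective.countable

instance [Infinite T] : Infinite (Vert T) :=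
  Infinite.of_injective (fun s : T => hub s.1 s.2) fun _ _ h => Subtype.ext (hub.inj h)

theorem finite_setOf_level_le (m : ℕ) : {v : Vert T | v.level ≤ m}.Finite := by
  refine ((List.finite_length_le Bool m).prod Set.finite_univ).preimage
    encode_injective.injOn |>.subset ?_
  rintro (_ | ⟨s, _⟩ | ⟨s, b, _⟩ | ⟨s, b, _, _⟩) h <;>
    simp [level, encode] at h ⊢ <;> omega

theorem node_mem {v : Vert T} (hv : v ≠ base) : v.node ∈ T := by
  cases v <;> first | exact absurd rfl hv | assumption

theorem ne_base_of_lt_level {v : Vert T} {m : ℕ} (h : m < v.level) : v ≠ base := by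
  rintro rfl
  exact Nat.not_lt_zero m h

theorem le_length_node {v : Vert T} {m : ℕ} (h : m < v.level) : m ≤ v.node.length := by
  cases v <;> simp_all [level, node]

end Vert

open Vert

open Classical in
noncomputable def slot (s : List Bool) (b : Bool) (hs : s ∈ T) : Vert T :=
  if h : b :: s ∈ T then hub (b :: s) h else cap s b hs h

noncomputable def Edge.ends : Edge T → Vert T × Vert T
  | baseLoop => (base, base)
  | root h => (base, hub [] h)
  | spoke s b hs => (hub s hs, port s b hs)
  | rim s hs => (port s false hs, port s true hs)
  | down s b hs => (port s b hs, slot s b hs)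
  | capLoop s b hs hb => (cap s b hs hb, cap s b hs hb)

theorem slot_of_mem {s : List Bool} {b : Bool} {hs : s ∈ T} (h : b :: s ∈ T) :
    slot s b hs = hub (b :: s) h := dif_pos h

theorem slot_of_notMem {s : List Bool} {b : Bool} {hs : s ∈ T} (h : b :: s ∉ T) :
    slot s b hs = cap s b hs h := dif_neg h

theorem slot_eq_hub_iff {s t : List Bool} {b : Bool} {hs : s ∈ T} {ht : t ∈ T} :
    slot s b hs = hub t ht ↔ b :: s = t := by
  unfold slot
  split_ifs with h
  · simp
  · simp only [false_iff]
    rintro rfl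
    exact h ht

theorem slot_eq_cap_iff {s t : List Bool} {b c : Bool} {hs : s ∈ T} {ht : t ∈ T}
    {hc : c :: t ∉ T} : slot s b hs = cap t c ht hc ↔ s = t ∧ b = c := by
  unfold slot
  split_ifs with h
  · simp only [false_iff, not_and]
    rintro rfl rfl
    exact hc h
  · simp [and_comm]

@[simp] theorem slot_ne_base {s : List Bool} {b : Bool} {hs : s ∈ T} : slot s b hs ≠ .base := by
  unfold slot; split_ifs <;> simp

@[simp] theorem slot_ne_port {s t : List Bool} {b c : Bool} {hs : s ∈ T} {ht : t ∈ T} :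
    slot s b hs ≠ port t c ht := by
  unfold slot; split_ifs <;> simp

theorem encard_ends_eq_three (hT : IsTree T) (h0 : [] ∈ T) (v : Vert T) :
    {e : Edge T | e.ends.1 = v}.encard + {e : Edge T | e.ends.2 = v}.encard = 3 := by
  rcases v with _ | ⟨s, hs⟩ | ⟨s, _ | _, hs⟩ | ⟨s, b, hs, hb⟩
  · rw [show {e : Edge T | e.ends.1 = .base} = {.baseLoop, .root h0} by
        ext e; cases e <;> simp [Edge.ends],
      show {e : Edge T | e.ends.2 = .base} = {.baseLoop} by ext e; cases e <;> simp [Edge.ends],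
      Set.encard_pair (by simp), Set.encard_singleton]
    rfl
  · obtain ⟨e₀, he₀⟩ : ∃ e₀, {e : Edge T | e.ends.2 = .hub s hs} = {e₀} := by
      rcases s with _ | ⟨b, t⟩
      · exact ⟨.root hs, by ext e; cases e <;> simp [Edge.ends, slot_eq_hub_iff, eq_comm]⟩
      · exact ⟨.down t b (hT hs), by
          ext e; cases e <;> simp [Edge.ends, slot_eq_hub_iff, eq_comm, and_comm]⟩
    rw [show {e : Edge T | e.ends.1 = .hub s hs} = {.spoke s false hs, .spoke s true hs} by
        ext e; cases e <;> simp [Edge.ends, eq_comm, ← and_or_left],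
      he₀, Set.encard_pair (by simp), Set.encard_singleton]
    rfl
  · rw [show {e : Edge T | e.ends.1 = .port s false hs} = {.rim s hs, .down s false hs} by
        ext e; cases e <;> simp [Edge.ends, eq_comm],
      show {e : Edge T | e.ends.2 = .port s false hs} = {.spoke s false hs} by
        ext e; cases e <;> simp [Edge.ends, eq_comm],
      Set.encard_pair (by simp), Set.encard_singleton]
    rfl
  · rw [show {e : Edge T | e.ends.1 = .port s true hs} = {.down s true hs} by
        ext e; cases e <;> simp [Edge.ends, eq_comm],
      show {e : Edge T | e.ends.2 = .port s true hs} = {.spoke s true hs, .rim s hs} by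
        ext e; cases e <;> simp [Edge.ends, eq_comm],
      Set.encard_pair (by simp), Set.encard_singleton]
    rfl
  · rw [show {e : Edge T | e.ends.1 = .cap s b hs hb} = {.capLoop s b hs hb} by
        ext e; cases e <;> simp [Edge.ends, eq_comm],
      show {e : Edge T | e.ends.2 = .cap s b hs hb} = {.down s b hs, .capLoop s b hs hb} by
        ext e; cases e <;> simp [Edge.ends, slot_eq_cap_iff, eq_comm],
      Set.encard_pair (by simp), Set.encard_singleton]
    rfl

theorem rtake_node_ends_eq {m : ℕ} (e : Edge T) (h₁ : m < e.ends.1.level)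
    (h₂ : m < e.ends.2.level) : e.ends.1.node.rtake m = e.ends.2.node.rtake m := by
  rcases e with _ | _ | _ | _ | ⟨s, b, hs⟩ | _
  · simp [Edge.ends, level] at h₁
  · simp [Edge.ends, level] at h₁
  · rfl
  · rfl
  · by_cases h : b :: s ∈ T
    · simp [Edge.ends, slot_of_mem h, node, List.rtake_cons_of_le b (Nat.le_of_lt_succ h₁)]
    · simp [Edge.ends, slot_of_notMem h, node]
  · rfl

section Graph

variable (σ : Vert T ≃ ℕ) (τ : Edge T ≃ ℕ)

noncomputable abbrev graph : BasedGraph := ofEquiv σ τ Edge.ends .base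

variable {σ τ} {S : Set ℕ} {m : ℕ}

theorem regular (hT : IsTree T) (h0 : [] ∈ T) : (graph σ τ).Regular 3 :=
  ofEquiv_regular (encard_ends_eq_three hT h0)

theorem rtake_node_eq_of_reachAvoid (hS : ∀ v, v.level ≤ m → σ v ∈ S) {v w : Vert T}
    (h : (graph σ τ).ReachAvoid S (σ v) (σ w)) : v.node.rtake m = w.node.rtake m :=
  h.apply_eq_of_ofEquiv (f := fun v => v.node.rtake m) fun e h₁ h₂ =>
    rtake_node_ends_eq e (not_le.1 fun h => h₁ (hS _ h)) (not_le.1 fun h => h₂ (hS _ h))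

theorem reachAvoid_ends (hS : ∀ v, σ v ∈ S → v.level ≤ m) (e : Edge T)
    (h₁ : m < e.ends.1.level) (h₂ : m < e.ends.2.level) :
    (graph σ τ).ReachAvoid S (σ e.ends.1) (σ e.ends.2) :=
  .of_adj (ofEquiv_adj e) (fun h => (hS _ h).not_gt h₁) (fun h => (hS _ h).not_gt h₂)

theorem reachAvoid_hub_rtake (hT : IsTree T) (hS : ∀ v, σ v ∈ S → v.level ≤ m) :
    ∀ (s : List Bool) (hs : s ∈ T), m ≤ s.length → ∀ h : s.rtake m ∈ T,
      (graph σ τ).ReachAvoid S (σ (hub s hs)) (σ (hub (s.rtake m) h))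
  | [], hs, hm, _ => by
    obtain rfl : m = 0 := Nat.le_zero.1 hm
    exact .refl fun h => (hS _ h).not_gt (Nat.succ_pos 0)
  | b :: t, hs, hm, h => by
    rcases hm.eq_or_lt with hm | hm
    · simp only [List.rtake_of_length_eq hm.symm]
      exact .refl fun h => (hS _ h).not_gt (by simp [level, hm])
    have hm : m < t.length + 1 := hm
    have hdown := reachAvoid_ends (τ := τ) hS (.down t b (hT hs)) hm (by
      simp [Edge.ends, slot_of_mem hs, level]; omega)
    have hspoke := reachAvoid_ends (τ := τ) hS (.spoke t b (hT hs)) hm hm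
    simp only [Edge.ends, slot_of_mem hs] at hdown hspoke
    simp only [List.rtake_cons_of_le b (Nat.le_of_lt_succ hm)]
    exact hdown.symm.trans (hspoke.symm.trans
      (reachAvoid_hub_rtake hT hS t (hT hs) (Nat.le_of_lt_succ hm) _))

theorem reachAvoid_hub_rtake_node (hT : IsTree T) (hS : ∀ v, σ v ∈ S → v.level ≤ m)
    {v : Vert T} (hv : m < v.level) (h : v.node.rtake m ∈ T) :
    (graph σ τ).ReachAvoid S (σ v) (σ (hub (v.node.rtake m) h)) := by
  have to_hub (s : List Bool) (hs : s ∈ T) (hm : m < s.length + 1) :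
      (graph σ τ).ReachAvoid S (σ (hub s hs)) (σ (hub (s.rtake m) (rtake_mem hT hs m))) :=
    reachAvoid_hub_rtake hT hS s hs (Nat.le_of_lt_succ hm) _
  have spoke (s : List Bool) (b : Bool) (hs : s ∈ T) (hm : m < s.length + 1) :
      (graph σ τ).ReachAvoid S (σ (port s b hs)) (σ (hub s hs)) :=
    (reachAvoid_ends (τ := τ) hS (.spoke s b hs) hm hm).symm
  rcases v with _ | ⟨s, hs⟩ | ⟨s, b, hs⟩ | ⟨s, b, hs, hb⟩
  · exact absurd hv (Nat.not_lt_zero m)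
  · exact to_hub s hs hv
  · exact (spoke s b hs hv).trans (to_hub s hs hv)
  · have hcap := reachAvoid_ends (τ := τ) hS (.down s b hs) hv
      (by simpa [Edge.ends, slot_of_notMem hb])
    simp only [Edge.ends, slot_of_notMem hb] at hcap
    exact hcap.symm.trans ((spoke s b hs hv).trans (to_hub s hs hv))

theorem connected (hT : IsTree T) (h0 : [] ∈ T) : (graph σ τ).Connected := by
  have hS : ∀ v, σ v ∈ (∅ : Set ℕ) → v.level ≤ 0 := fun _ h =>
    absurd h (Set.notMem_empty _)
  have to_base (v : Vert T) : (graph σ τ).ReachAvoid ∅ (σ v) (σ .base) := by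
    rcases Nat.eq_zero_or_pos v.level with hv | hv
    · obtain rfl : v = .base := by cases v <;> simp_all [level]
      exact .refl (Set.notMem_empty _)
    · have hroot : (graph σ τ).ReachAvoid ∅ (σ .base) (σ (hub [] h0)) :=
        .of_adj (ofEquiv_adj (Edge.root h0)) (Set.notMem_empty _) (Set.notMem_empty _)
      exact (reachAvoid_hub_rtake_node hT hS hv (by simpa using h0)).trans
        (by simpa [Edge.ends] using hroot.symm)
  exact connected_of_reachAvoid fun u w => by
    simpa using (to_base (σ.symm u)).trans (to_base (σ.symm w)).symm

variable (σ) in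
noncomputable def lowSet (m : ℕ) : Finset ℕ := ((finite_setOf_level_le m).image σ).toFinset

theorem mem_lowSet {v : Vert T} : σ v ∈ lowSet σ m ↔ v.level ≤ m := by
  simp [lowSet]

theorem lowSet_mono {n : ℕ} (h : m ≤ n) : lowSet σ m ⊆ lowSet σ n := fun w hw => by
  rw [← σ.apply_symm_apply w] at hw ⊢
  exact mem_lowSet.2 ((mem_lowSet.1 hw).trans h)

variable (σ) in
def depth (S : Finset ℕ) : ℕ := S.sup fun w => (σ.symm w).level

theorem level_le_depth {S : Finset ℕ} {v : Vert T} (h : σ v ∈ S) : v.level ≤ depth σ S := by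
  have := Finset.le_sup (f := fun w => (σ.symm w).level) h
  simp only [σ.symm_apply_apply] at this
  exact this

theorem depth_lowSet_le (m : ℕ) : depth σ (lowSet σ m) ≤ m :=
  Finset.sup_le fun w hw => mem_lowSet.1 (by rwa [σ.apply_symm_apply])

variable (T) in
def branches : Set (ℕ → Bool) := {x | ∀ n, res x n ∈ T}

def rayHub {x : ℕ → Bool} (hx : x ∈ branches T) (n : ℕ) : Vert T := hub (res x n) (hx n)

theorem reachAvoid_rayHub (hT : IsTree T) (hS : ∀ v, σ v ∈ S → v.level ≤ m)
    {x : ℕ → Bool} (hx : x ∈ branches T) {a b : ℕ} (ha : m ≤ a) (hab : a ≤ b) :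
    (graph σ τ).ReachAvoid S (σ (rayHub hx a)) (σ (rayHub hx b)) := by
  have := reachAvoid_hub_rtake (τ := τ) hT (fun v hv => (hS v hv).trans ha) (res x b) (hx b)
    (by rwa [res_length]) (by rw [rtake_res x hab]; exact hx a)
  simp only [rtake_res x hab] at this
  exact this.symm

end Graph

section Ends

variable {σ : Vert T ≃ ℕ} {τ : Edge T ≃ ℕ} {m : ℕ}

theorem exists_component_lowSet (e : EndSpace (graph σ τ)) (m : ℕ) :
    ∃ v : Vert T, m < v.level ∧
      ∀ w, e.1 (lowSet σ m) w = true ↔ (graph σ τ).ReachAvoid (lowSet σ m) (σ v) w := by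
  obtain ⟨w, hw, hiff⟩ := e.2.1 (lowSet σ m)
  refine ⟨σ.symm w, not_le.1 fun h => hw ?_, by simpa using hiff⟩
  simpa using mem_lowSet (σ := σ) |>.2 h

/-- The node of length `m` below which the end `e` lives. -/
noncomputable def nodeAt (e : EndSpace (graph σ τ)) (m : ℕ) : List Bool :=
  (exists_component_lowSet e m).choose.node.rtake m

theorem nodeAt_spec (hT : IsTree T) (e : EndSpace (graph σ τ)) (m : ℕ) :
    (nodeAt e m).length = m ∧ ∃ h, e.1 (lowSet σ m) (σ (hub (nodeAt e m) h)) = true := by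
  obtain ⟨hv, hiff⟩ := (exists_component_lowSet e m).choose_spec
  have hm := le_length_node hv
  refine ⟨by simp [nodeAt, List.rtake]; omega,
    rtake_mem hT (node_mem (ne_base_of_lt_level hv)) m, ?_⟩
  exact (hiff _).2 (reachAvoid_hub_rtake_node hT (fun _ => mem_lowSet.1) hv _)

theorem eq_nodeAt (hT : IsTree T) (e : EndSpace (graph σ τ)) {t : List Bool}
    (ht : t ∈ T) (hlen : t.length = m) (h : e.1 (lowSet σ m) (σ (hub t ht)) = true) :
    t = nodeAt e m := by
  obtain ⟨hlen', h', htrue⟩ := nodeAt_spec hT e m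
  have := rtake_node_eq_of_reachAvoid (fun _ => mem_lowSet.2) ((e.apply_eq_true_iff h _).1 htrue)
  simpa [node, List.rtake_of_length_eq hlen, List.rtake_of_length_eq hlen'] using this

theorem rtake_nodeAt (hT : IsTree T) (e : EndSpace (graph σ τ)) {n : ℕ} (h : m ≤ n) :
    (nodeAt e n).rtake m = nodeAt e m := by
  obtain ⟨hlen, hn, htrue⟩ := nodeAt_spec hT e n
  have hr := reachAvoid_hub_rtake (σ := σ) (τ := τ) hT (fun _ => mem_lowSet.1) (nodeAt e n) hn
    (hlen.ge.trans' h) (rtake_mem hT hn m)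
  exact eq_nodeAt hT e _ (by simp [List.rtake]; omega)
    ((e.apply_eq_true_iff (e.2.2 _ _ (lowSet_mono h) _ htrue) _).2 hr)

noncomputable def branch (e : EndSpace (graph σ τ)) (k : ℕ) : Bool := (nodeAt e (k + 1)).headI

theorem res_branch (hT : IsTree T) (e : EndSpace (graph σ τ)) :
    ∀ m, res (branch e) m = nodeAt e m
  | 0 => (List.eq_nil_of_length_eq_zero (nodeAt_spec hT e 0).1).symm
  | m + 1 => by
    obtain ⟨c, t, hct⟩ := List.exists_cons_of_length_eq_add_one (nodeAt_spec hT e (m + 1)).1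
    have ht : t.length = m := by simpa [hct] using (nodeAt_spec hT e (m + 1)).1
    have htail : t = nodeAt e m := by
      rw [← rtake_nodeAt hT e m.le_succ, hct, List.rtake_cons_of_le c ht.ge,
        List.rtake_of_length_eq ht]
    rw [res_succ, res_branch hT e m, branch, hct, htail]
    rfl

theorem branch_mem (hT : IsTree T) (e : EndSpace (graph σ τ)) : branch e ∈ branches T :=
  fun n => res_branch hT e n ▸ (nodeAt_spec hT e n).2.1

theorem end_apply_eq_true_iff (hT : IsTree T) (e : EndSpace (graph σ τ))
    {S : Finset ℕ} (hS : ∀ v, σ v ∈ S → v.level ≤ m) (w : ℕ) :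
    e.1 S w = true ↔ (graph σ τ).ReachAvoid S (σ (rayHub (branch_mem hT e) m)) w := by
  obtain ⟨-, h, htrue⟩ := nodeAt_spec hT e m
  have hsub : S ⊆ lowSet σ m := fun w hw => by
    rw [← σ.apply_symm_apply w] at hw ⊢
    exact mem_lowSet.2 (hS _ hw)
  refine e.apply_eq_true_iff ?_ w
  simpa [rayHub, res_branch hT e m] using e.2.2 _ _ hsub _ htrue

open Classical in
noncomputable def rayEnd (hT : IsTree T) {x : ℕ → Bool} (hx : x ∈ branches T) :
    EndSpace (graph σ τ) :=
  ⟨fun S w => decide ((graph σ τ).ReachAvoid S (σ (rayHub hx (depth σ S))) w),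
    fun S => ⟨_, fun h => (level_le_depth h).not_gt (by simp [rayHub, level]),
      fun _ => decide_eq_true_iff⟩,
    fun S S' hSS' w h => by
      simp only [decide_eq_true_eq] at h ⊢
      exact (reachAvoid_rayHub hT (fun _ => level_le_depth) hx le_rfl
        (Finset.sup_mono hSS')).trans (h.mono (by simpa using hSS'))⟩

theorem rayEnd_branch (hT : IsTree T) (e : EndSpace (graph σ τ)) :
    rayEnd hT (branch_mem hT e) = e := by
  refine Subtype.ext (funext₂ fun S w => ?_)
  rw [Bool.eq_iff_iff, end_apply_eq_true_iff hT e (fun _ => level_le_depth)]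
  simp [rayEnd]

open Classical in
theorem nodeAt_rayEnd (hT : IsTree T) {x : ℕ → Bool} (hx : x ∈ branches T) (m : ℕ) :
    nodeAt (rayEnd (σ := σ) (τ := τ) hT hx) m = res x m := by
  refine (eq_nodeAt hT _ (hx m) (res_length x m) ?_).symm
  exact decide_eq_true
    (reachAvoid_rayHub hT (fun _ => level_le_depth) hx le_rfl (depth_lowSet_le m))

theorem isLocallyConstant_nodeAt (hT : IsTree T) (m : ℕ) :
    IsLocallyConstant fun e : EndSpace (graph σ τ) => nodeAt e m := by
  refine (IsLocallyConstant.iff_exists_open _).2 fun e₀ => ?_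
  obtain ⟨hlen, h, htrue⟩ := nodeAt_spec hT e₀ m
  exact ⟨{e | e.1 (lowSet σ m) (σ (hub _ h)) = true},
    (EndSpace.continuous_apply (G := graph σ τ) _ _).isOpen_preimage {true} (isOpen_discrete _),
    htrue, fun e he => (eq_nodeAt hT e h hlen he).symm⟩

open Classical in
theorem continuous_rayEnd (hT : IsTree T) :
    Continuous fun x : branches T => rayEnd (σ := σ) (τ := τ) hT x.2 := by
  refine Continuous.subtype_mk (continuous_pi fun S => continuous_pi fun w => ?_) _
  refine IsLocallyConstant.continuous ((IsLocallyConstant.iff_exists_open _).2 fun x₀ => ?_)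
  refine ⟨Subtype.val ⁻¹' cylinder x₀.1 (depth σ S),
    (isOpen_cylinder _ _ _).preimage continuous_subtype_val, self_mem_cylinder _ _,
    fun x hx => ?_⟩
  have h : rayHub x.2 (depth σ S) = rayHub x₀.2 (depth σ S) := by
    simpa [rayHub, cylinder_eq_res] using hx
  change decide _ = decide _
  rw [h]

noncomputable def endsHomeomorph (hT : IsTree T) : EndSpace (graph σ τ) ≃ₜ branches T where
  toFun e := ⟨branch e, branch_mem hT e⟩
  invFun x := rayEnd hT x.2
  left_inv := rayEnd_branch hT
  right_inv x := Subtype.ext (funext fun k => by simp [branch, nodeAt_rayEnd, res_succ])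
  continuous_toFun := Continuous.subtype_mk (continuous_pi fun k =>
    ((isLocallyConstant_nodeAt hT (k + 1)).comp List.headI).continuous) _
  continuous_invFun := continuous_rayEnd hT

def triangleVert {x : ℕ → Bool} (hx : x ∈ branches T) (k : ℕ) : Option Bool → Vert T
  | none => hub (res x k) (hx k)
  | some b => port (res x k) b (hx k)

def triangleEdge {x : ℕ → Bool} (hx : x ∈ branches T) (k : ℕ) : Option Bool → Edge T
  | none => .rim (res x k) (hx k)
  | some b => .spoke (res x k) b (hx k)

/-- The triangles of the nodes of lengths `m, …, m + n` on `x`, with the `n` edges joining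
consecutive ones, form a connected graph with `3 (n + 1)` vertices and `3 (n + 1) + n` edges. -/
theorem rankGe_of_ray {x : ℕ → Bool} (hx : x ∈ branches T) {A : Set ℕ} (m n : ℕ)
    (hA : ∀ j ≤ n, ∀ o, σ (triangleVert hx (m + j) o) ∈ A) : (graph σ τ).RankGe A n := by
  have hres {a b : ℕ} : res x a = res x b ↔ a = b := (res_injective_right x).eq_iff
  refine ofEquiv_rankGe (ι := Fin (n + 1) × Option Bool)
    (κ := (Fin (n + 1) × Option Bool) ⊕ Fin n) (f := fun p => triangleVert hx (m + p.1) p.2)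
    (g := Sum.elim (fun p => triangleEdge hx (m + p.1) p.2)
      fun j => .down (res x (m + j)) (x (m + j)) (hx _))
    ?_ ?_ (fun p => hA p.1 p.1.is_le _) ?_ ?_
  · rintro ⟨j, _ | b⟩ ⟨j', _ | b'⟩ h <;> simp_all [triangleVert, Fin.ext_iff]
  · rintro (⟨j, _ | b⟩ | j) (⟨j', _ | b'⟩ | j') h <;> simp_all [triangleEdge, Fin.ext_iff]
  · rintro (⟨j, _ | b⟩ | j)
    · exact ⟨⟨(j, some false), rfl⟩, ⟨(j, some true), rfl⟩⟩
    · exact ⟨⟨(j, none), rfl⟩, ⟨(j, some b), rfl⟩⟩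
    · refine ⟨⟨(j.castSucc, some (x (m + j))), rfl⟩, ⟨(j.succ, none), ?_⟩⟩
      simp [Edge.ends, triangleVert, slot_of_mem (hx (m + j + 1)), ← add_assoc, res_succ]
  · simp

theorem accumulatedByLoops (hT : IsTree T) (e : EndSpace (graph σ τ)) :
    AccumulatedByLoops (graph σ τ) e := fun S n => by
  have hS : ∀ v, σ v ∈ S → v.level ≤ depth σ S := fun _ => level_le_depth
  refine rankGe_of_ray (branch_mem hT e) (depth σ S) n fun j _ o => ?_
  have hray := reachAvoid_rayHub (τ := τ) hT hS (branch_mem hT e) le_rfl (Nat.le_add_right _ j)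
  have hlt : depth σ S < (res (branch e) (depth σ S + j)).length + 1 := by simp
  refine (end_apply_eq_true_iff hT e hS _).2 ?_
  cases o with
  | none => exact hray
  | some b => exact hray.trans (reachAvoid_ends hS (.spoke _ b _) hlt hlt)

end Ends

end TreeGraph

open TreeGraph

def prefixTree (C : Set (ℕ → Bool)) : Set (List Bool) := {s | ∃ x ∈ C, res x s.length = s}

section PrefixTree

variable {C : Set (ℕ → Bool)}

theorem isTree_prefixTree : IsTree (prefixTree C) := fun _ _ ⟨x, hx, hs⟩ =>
  ⟨x, hx, (List.cons.inj hs).2⟩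

theorem res_mem_prefixTree {x : ℕ → Bool} (hx : x ∈ C) (n : ℕ) : res x n ∈ prefixTree C :=
  ⟨x, hx, by rw [res_length]⟩

theorem infinite_prefixTree (hne : C.Nonempty) : (prefixTree C).Infinite := by
  obtain ⟨x, hx⟩ := hne
  exact (Set.infinite_range_of_injective (res_injective_right x)).mono
    (Set.range_subset_iff.2 (res_mem_prefixTree hx))

theorem branches_prefixTree (hcl : IsClosed C) : branches (prefixTree C) = C := by
  refine Set.Subset.antisymm (fun x hx => ?_) fun x hx => res_mem_prefixTree hx
  rw [← hcl.closure_eq, (isTopologicalBasis_cylinders fun _ => Bool).mem_closure_iff]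
  rintro _ ⟨y, n, rfl⟩ hxy
  obtain ⟨z, hz, hzx⟩ := hx n
  rw [res_length] at hzx
  refine ⟨z, ?_, hz⟩
  rw [← mem_cylinder_iff_eq.1 hxy, cylinder_eq_res]
  exact hzx

end PrefixTree

/-- every nonempty closed subset `C` of Cantor space is the end space of
a connected, infinite, 3-regular graph all of whose ends are accumulated by loops. -/
theorem closed_subset_realized_in_G3 (C : Set (ℕ → Bool))
    (hne : C.Nonempty) (hcl : IsClosed C) :
    ∃ G : BasedGraph, G.Connected ∧ G.Regular 3 ∧
      Nonempty (EndSpace G ≃ₜ C) ∧ ∀ e : EndSpace G, AccumulatedByLoops G e := by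
  have hT : IsTree (prefixTree C) := isTree_prefixTree
  have h0 : [] ∈ prefixTree C := hne.elim fun x hx => res_mem_prefixTree hx 0
  have := (infinite_prefixTree hne).to_subtype
  obtain ⟨σ⟩ : Nonempty (Vert (prefixTree C) ≃ ℕ) := nonempty_equiv_of_countable
  obtain ⟨τ⟩ : Nonempty (Edge (prefixTree C) ≃ ℕ) := nonempty_equiv_of_countable
  exact ⟨graph σ τ, connected hT h0, regular hT h0,
    ⟨(endsHomeomorph hT).trans (.setCongr (branches_prefixTree hcl))⟩, accumulatedByLoops hT⟩
end

section
/- In the space 𝒢_3 of based, connected, infinite, 3-regular graphs, the set U_n of graphs with rank at least n is dense: for every Γ ∈ 𝒢_3 and every r ∈ ℕ there exists Δ ∈ 𝒢_3 with B_r(Δ) ≅ B_r(Γ) and rank(Δ) ≥ n. -/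
open TopologicalSpace

open BasedGraph

namespace RGD
open BasedGraph
variable {G : BasedGraph} {u v w : ℕ} {m k n : ℕ}

lemma reachesIn_self (G : BasedGraph) (u : ℕ) : G.ReachesIn 0 u u :=
  ⟨fun _ => u, rfl, rfl, fun i h => absurd h (Nat.not_lt_zero i)⟩

lemma adj_symm (h : G.Adj u v) : G.Adj v u := by
  obtain ⟨e, he⟩ := h; exact ⟨e, by rw [he, Sym2.eq_swap]⟩

lemma adj_reachesIn (h : G.Adj u v) : G.ReachesIn 1 u v := by
  refine ⟨fun i => if i = 0 then u else v, by simp, by simp, fun i hi => ?_⟩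
  have : i = 0 := by omega
  simp [this, h]

lemma reachesIn_symm (h : G.ReachesIn n u v) : G.ReachesIn n v u := by
  obtain ⟨f, h0, hn, hs⟩ := h
  refine ⟨fun i => f (n - i), by simp [hn], by simp [h0], fun i hi => ?_⟩
  show G.Adj (f (n - i)) (f (n - (i+1)))
  have h1 : n - i = (n - (i+1)) + 1 := by omega
  rw [h1]
  exact adj_symm (hs _ (by omega))

lemma reachesIn_trans (h1 : G.ReachesIn m u v) (h2 : G.ReachesIn k v w) :
    G.ReachesIn (m + k) u w := by
  obtain ⟨f, f0, fm, fs⟩ := h1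
  obtain ⟨g, g0, gk, gs⟩ := h2
  refine ⟨fun i => if i ≤ m then f i else g (i - m), by simp [f0], ?_, fun i hi => ?_⟩
  · by_cases h : m + k ≤ m
    · have hk : k = 0 := by omega
      simp only [if_pos h]
      rw [show m + k = m by omega, fm, ← g0, ← hk, gk]
    · simp only [if_neg (by omega : ¬ m + k ≤ m)]
      rw [show m + k - m = k by omega, gk]
  · by_cases h : i + 1 ≤ m
    · simp only [if_pos (by omega : i ≤ m), if_pos h]
      exact fs i (by omega)
    · by_cases h' : i ≤ m
      · have him : i = m := by omega
        simp only [if_pos h', if_neg h]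
        rw [him, fm, show m + 1 - m = 1 by omega, ← g0]
        simpa using gs 0 (by omega)
      · simp only [if_neg h', if_neg h]
        rw [show i + 1 - m = (i - m) + 1 by omega]
        exact gs (i - m) (by omega)

lemma reachesIn_snoc (h : G.ReachesIn n u v) (ha : G.Adj v w) :
    G.ReachesIn (n + 1) u w :=
  reachesIn_trans h (adj_reachesIn ha)

lemma dist_le (h : G.ReachesIn n u v) : G.dist u v ≤ n := Nat.sInf_le h

lemma reachesIn_dist (h : ∃ m, G.ReachesIn m u v) : G.ReachesIn (G.dist u v) u v :=
  Nat.sInf_mem h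

lemma dist_self (G : BasedGraph) (u : ℕ) : G.dist u u = 0 :=
  Nat.le_zero.mp (dist_le (reachesIn_self G u))

lemma base_mem_ballV (G : BasedGraph) (r : ℕ) : G.base ∈ G.ballV r := by
  simp only [ballV, Set.mem_setOf_eq, dist_self]; omega

lemma dist_le_adj (hc : G.Connected) (ha : G.Adj u w) (v : ℕ) :
    G.dist v w ≤ G.dist v u + 1 :=
  dist_le (reachesIn_snoc (reachesIn_dist (hc v u)) ha)

lemma sym2_mem_finite (z : Sym2 ℕ) : {w : ℕ | w ∈ z}.Finite := by
  induction z using Sym2.ind with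
  | _ a b =>
    have : {w : ℕ | w ∈ s(a, b)} = {a, b} := by
      ext w; simp [Sym2.mem_iff]
    rw [this]; exact (Set.finite_singleton b).insert a

lemma sym2_exists_mem (z : Sym2 ℕ) : ∃ a, a ∈ z := by
  induction z using Sym2.ind with
  | _ a b => exact ⟨a, by simp [Sym2.mem_iff]⟩

lemma nbrs_finite (hlf : G.LocallyFinite) (v : ℕ) : {w | G.Adj v w}.Finite := by
  have hsub : {w | G.Adj v w} ⊆ ⋃ e ∈ {e : ℕ | v ∈ G.edges e}, {w | w ∈ G.edges e} := by
    rintro w ⟨e, he⟩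
    exact Set.mem_biUnion (show v ∈ G.edges e by simp [he, Sym2.mem_iff])
      (show w ∈ G.edges e by simp [he, Sym2.mem_iff])
  exact ((hlf v).biUnion fun e _ => sym2_mem_finite _).subset hsub

lemma ballV_finite (hc : G.Connected) (hlf : G.LocallyFinite) (r : ℕ) :
    (G.ballV r).Finite := by
  induction r with
  | zero =>
    refine Set.Finite.subset (Set.finite_singleton G.base) ?_
    intro v hv
    simp only [ballV, Set.mem_setOf_eq, Nat.le_zero] at hv
    obtain ⟨f, h0, hn, -⟩ := reachesIn_dist (hc G.base v)
    simp only [hv] at hn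
    simp [← hn, h0]
  | succ r ih =>
    refine Set.Finite.subset (ih.union (ih.biUnion fun v _ => nbrs_finite hlf v)) ?_
    intro v hv
    simp only [ballV, Set.mem_setOf_eq] at hv
    obtain ⟨f, h0, hn, hs⟩ := reachesIn_dist (hc G.base v)
    by_cases hd : G.dist G.base v ≤ r
    · exact Or.inl hd
    · have hdr : G.dist G.base v = r + 1 := by omega
      have h1 : f r ∈ G.ballV r := dist_le ⟨f, h0, rfl, fun i hi => hs i (by omega)⟩
      have h2 : G.Adj (f r) v := by
        have := hs r (by omega)
        rw [hdr] at hn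
        rw [← hn]; exact this
      exact Or.inr (Set.mem_biUnion h1 h2)

lemma exists_crossing {B : Set ℕ} (f : ℕ → ℕ) :
    ∀ n, f 0 ∈ B → f n ∉ B → ∃ i < n, f i ∈ B ∧ f (i+1) ∉ B := by
  intro n
  induction n with
  | zero => intro h1 h2; exact absurd h1 h2
  | succ n ih =>
    intro h1 h2
    by_cases hn : f n ∈ B
    · exact ⟨n, by omega, hn, h2⟩
    · obtain ⟨i, hi, h⟩ := ih h1 hn
      exact ⟨i, by omega, h⟩

/-- Edge code `d` of the standard cubic half-ladder: codes `3i, 3i+1` are the two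
parallel edges joining vertices `2i, 2i+1`; code `3i+2` joins `2i+1, 2i+2`. -/
def lE (d : ℕ) : Sym2 ℕ :=
  if d % 3 = 2 then s(2*(d/3)+1, 2*(d/3)+2) else s(2*(d/3), 2*(d/3)+1)

lemma lE_consec (d : ℕ) : ∃ x, lE d = s(x, x+1) := by
  unfold lE; split_ifs <;> exact ⟨_, rfl⟩

lemma lE_mem_iff (c d : ℕ) : c ∈ lE d ↔
    (if c % 2 = 1 then d = 3*(c/2) ∨ d = 3*(c/2)+1 ∨ d = 3*(c/2)+2
     else d = 3*(c/2) ∨ d = 3*(c/2)+1 ∨ (1 ≤ c/2 ∧ d = 3*(c/2)-1)) := by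
  unfold lE
  split_ifs with h1 h2 h2 <;> simp only [Sym2.mem_iff] <;> omega

lemma lE_mem_lt {x d m : ℕ} (hd : d < 3*m - 1) (hx : x ∈ lE d) : x < 2*m := by
  rw [lE_mem_iff] at hx
  split_ifs at hx <;> omega

lemma lE_eval_even (c : ℕ) (h : c % 2 = 0) : lE (3*(c/2)) = s(c, c+1) := by
  unfold lE
  rw [if_neg (by omega), show 2*(3*(c/2)/3) = c by omega]

lemma lE_eval_odd (c : ℕ) (h : c % 2 = 1) : lE (3*(c/2)+2) = s(c, c+1) := by
  unfold lE
  rw [if_pos (by omega)]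
  have e1 : (3*(c/2)+2)/3 = c/2 := by omega
  rw [e1, show 2*(c/2)+1 = c by omega, show 2*(c/2)+2 = c+1 by omega]

lemma lE_succ (c : ℕ) : ∃ d, lE d = s(c, c+1) := by
  rcases Nat.even_or_odd c with hc | hc
  · exact ⟨_, lE_eval_even c (Nat.even_iff.mp hc)⟩
  · exact ⟨_, lE_eval_odd c (Nat.odd_iff.mp hc)⟩


lemma lE_mem_zero_iff (d : ℕ) : 0 ∈ lE d ↔ d = 0 ∨ d = 1 := by
  rw [lE_mem_iff]
  norm_num

lemma lE_mem_odd_iff (c d : ℕ) (h : c % 2 = 1) :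
    c ∈ lE d ↔ d = 3*(c/2) ∨ d = 3*(c/2)+1 ∨ d = 3*(c/2)+2 := by
  rw [lE_mem_iff, if_pos h]

lemma lE_mem_even_iff (c d : ℕ) (h : c % 2 = 0) (h2 : c ≠ 0) :
    c ∈ lE d ↔ d = 3*(c/2)-1 ∨ d = 3*(c/2) ∨ d = 3*(c/2)+1 := by
  rw [lE_mem_iff, if_neg (by omega)]
  omega

lemma ncard_triple {a b c : ℕ} (h1 : a ≠ b) (h2 : a ≠ c) (h3 : b ≠ c) :
    ({a, b, c} : Set ℕ).ncard = 3 := by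
  rw [Set.ncard_insert_of_notMem (by simp [h1, h2]) (Set.toFinite _),
    Set.ncard_insert_of_notMem (by simp [h3]) (Set.toFinite _), Set.ncard_singleton]

end RGD

open RGD in
/-- in `𝒢₃`, the set `U_n` of graphs of rank at least `n` is dense:
every basic set `U_{(Γ,r)}` contains a graph of rank at least `n`. -/
theorem rank_ge_n_dense (n : ℕ) :
    ∀ (Γ : Gspace 3) (r : ℕ), ∃ Δ : Gspace 3,
      BallIso r Γ.1 Δ.1 ∧ RankGe Δ.1 Set.univ n := by
  classical
  rintro ⟨G, hGc, hGlf, hGdeg⟩ r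
  set B : Set ℕ := G.ballV r with hBdef
  have hBfin : B.Finite := ballV_finite hGc hGlf r
  have hbase : G.base ∈ B := base_mem_ballV G r
  have hBmem : ∀ x, x ∈ B ↔ G.dist G.base x ≤ r := fun x => Iff.rfl
  set NB : Set ℕ := {e | ∃ v ∈ G.edges e, v ∈ B} with hNBdef
  have hNBfin : NB.Finite := by
    refine Set.Finite.subset (hBfin.biUnion fun v _ => hGlf v) ?_
    rintro e ⟨v, hv1, hv2⟩
    exact Set.mem_biUnion hv2 hv1
  have hmemB : ∀ e ∈ G.ballE r, ∀ x ∈ G.edges e, x ∈ B := fun e he => he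
  have hballE_sub : G.ballE r ⊆ NB := by
    intro e he
    obtain ⟨a, ha⟩ := sym2_exists_mem (G.edges e)
    exact ⟨a, ha, hmemB e he a ha⟩
  set BD : Set ℕ := NB \ G.ballE r with hBDdef
  have hBDsub : BD ⊆ NB := Set.diff_subset
  have hBDnE : ∀ e ∈ BD, e ∉ G.ballE r := fun e he => he.2
  have hBDfin : BD.Finite := hNBfin.subset Set.diff_subset
  have hBDne : BD.Nonempty := by
    obtain ⟨v0, hv0⟩ := hBfin.infinite_compl.nonempty
    obtain ⟨f, h0, hn, hs⟩ := reachesIn_dist (hGc G.base v0)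
    obtain ⟨i, hi, hiB, hiB'⟩ := exists_crossing f _ (h0 ▸ hbase) (hn ▸ hv0)
    obtain ⟨e, he⟩ := hs i hi
    refine ⟨e, ⟨f i, by simp [he, Sym2.mem_iff], hiB⟩, fun hbe => ?_⟩
    exact hiB' (hmemB e hbe (f (i+1)) (by simp [he, Sym2.mem_iff]))
  have hstr : ∀ j : ↥BD, ∃ uv wv, uv ∈ B ∧ wv ∉ B ∧ G.edges ↑j = s(uv, wv) := by
    rintro ⟨e, ⟨u0, hu0e, hu0B⟩, heB⟩
    have h2 : ∃ w0 ∈ G.edges e, w0 ∉ B := by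
      by_contra hco
      push_neg at hco
      exact heB hco
    obtain ⟨w0, hw0e, hw0B⟩ := h2
    have hsp := Sym2.other_spec hu0e
    refine ⟨u0, Sym2.Mem.other hu0e, hu0B, fun hoB => ?_, hsp.symm⟩
    rw [← hsp, Sym2.mem_iff] at hw0e
    rcases hw0e with h | h
    · exact hw0B (h ▸ hu0B)
    · exact hw0B (h ▸ hoB)
  choose uu ww huB hwB hedge using hstr
  have hadjGu : ∀ j : ↥BD, G.Adj (uu j) (ww j) := fun j => ⟨↑j, hedge j⟩
  have hu_dist : ∀ j : ↥BD, G.dist G.base (uu j) = r := by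
    intro j
    have h1 : G.dist G.base (uu j) ≤ r := (hBmem _).mp (huB j)
    have h2 : ¬ G.dist G.base (ww j) ≤ r := fun h => hwB j ((hBmem _).mpr h)
    have h3 := dist_le_adj hGc (hadjGu j) G.base
    omega
  -- enumerations of the complements
  haveI hVi : Infinite ↥(Bᶜ) := hBfin.infinite_compl.to_subtype
  haveI hEi : Infinite ↥(NBᶜ) := hNBfin.infinite_compl.to_subtype
  haveI hBDni : Nonempty ↥BD := hBDne.to_subtype
  haveI : Infinite (↥BD × ℕ) :=
    Infinite.of_injective (fun k => ((Classical.arbitrary ↥BD), k))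
      (fun a b h => by simpa using congrArg Prod.snd h)
  obtain ⟨vE⟩ : Nonempty ((↥BD × ℕ) ≃ ↥(Bᶜ)) := by
    obtain ⟨d1⟩ := nonempty_denumerable (↥BD × ℕ)
    obtain ⟨d2⟩ := nonempty_denumerable (↥(Bᶜ))
    exact ⟨(@Denumerable.eqv _ d1).trans (@Denumerable.eqv _ d2).symm⟩
  obtain ⟨eE⟩ : Nonempty ((↥BD × ℕ) ≃ ↥(NBᶜ)) := by
    obtain ⟨d1⟩ := nonempty_denumerable (↥BD × ℕ)
    obtain ⟨d2⟩ := nonempty_denumerable (↥(NBᶜ))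
    exact ⟨(@Denumerable.eqv _ d1).trans (@Denumerable.eqv _ d2).symm⟩
  set vm : ↥BD → ℕ → ℕ := fun j c => (vE (j, c) : ℕ) with hvmdef
  set em : ↥BD → ℕ → ℕ := fun j d => (eE (j, d) : ℕ) with hemdef
  have hvmB : ∀ j c, vm j c ∉ B := fun j c => (vE (j, c)).2
  have hemN : ∀ j d, em j d ∉ NB := fun j d => (eE (j, d)).2
  have hvm_inj : ∀ j c j' c', vm j c = vm j' c' → j = j' ∧ c = c' := by
    intro j c j' c' h
    have := vE.injective (Subtype.ext h)
    exact ⟨congrArg Prod.fst this, congrArg Prod.snd this⟩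
  have hem_inj : ∀ j d j' d', em j d = em j' d' → j = j' ∧ d = d' := by
    intro j d j' d' h
    have := eE.injective (Subtype.ext h)
    exact ⟨congrArg Prod.fst this, congrArg Prod.snd this⟩
  have hvm_surj : ∀ v, v ∉ B → ∃ j c, vm j c = v := by
    intro v hv
    refine ⟨(vE.symm ⟨v, hv⟩).1, (vE.symm ⟨v, hv⟩).2, ?_⟩
    show (vE ((vE.symm ⟨v, hv⟩).1, (vE.symm ⟨v, hv⟩).2) : ℕ) = v
    rw [show ((vE.symm ⟨v, hv⟩).1, (vE.symm ⟨v, hv⟩).2) = vE.symm ⟨v, hv⟩ from rfl,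
      vE.apply_symm_apply]
  have hem_surj : ∀ e, e ∉ NB → ∃ j d, em j d = e := by
    intro e he
    refine ⟨(eE.symm ⟨e, he⟩).1, (eE.symm ⟨e, he⟩).2, ?_⟩
    show (eE ((eE.symm ⟨e, he⟩).1, (eE.symm ⟨e, he⟩).2) : ℕ) = e
    rw [show ((eE.symm ⟨e, he⟩).1, (eE.symm ⟨e, he⟩).2) = eE.symm ⟨e, he⟩ from rfl,
      eE.apply_symm_apply]
  have hem_ne_j : ∀ (j j' : ↥BD) (d : ℕ), em j d ≠ ↑j' :=
    fun j j' d h => hemN j d (h ▸ hBDsub j'.2)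
  -- the new edge function
  obtain ⟨De, hDe1, hDe2, hDe3⟩ :
      ∃ De : ℕ → Sym2 ℕ,
        (∀ e ∈ G.ballE r, De e = G.edges e) ∧
        (∀ j : ↥BD, De ↑j = s(uu j, vm j 0)) ∧
        (∀ j d, De (em j d) = Sym2.map (vm j) (lE d)) := by
    refine ⟨fun e =>
      if he : e ∈ G.ballE r then G.edges e
      else if hd : e ∈ BD then s(uu ⟨e, hd⟩, vm ⟨e, hd⟩ 0)
      else Sym2.map (vm (eE.symm ⟨e, fun h => hd ⟨h, he⟩⟩).1)
        (lE (eE.symm ⟨e, fun h => hd ⟨h, he⟩⟩).2), ?_, ?_, ?_⟩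
    · intro e he; simp only [dif_pos he]
    · intro j
      beta_reduce
      rw [dif_neg (hBDnE _ j.2), dif_pos j.2]
    · intro j d
      have h1 : em j d ∉ NB := hemN j d
      beta_reduce
      rw [dif_neg (fun h => h1 (hballE_sub h)), dif_neg (fun h => h1 (hBDsub h))]
      show Sym2.map (vm (eE.symm (eE (j, d))).1) (lE ((eE.symm (eE (j, d))).2)) = _
      rw [eE.symm_apply_apply]
  set D : BasedGraph := ⟨De, G.base⟩ with hDdef
  have hDE : ∀ e, D.edges e = De e := fun _ => rfl
  have hDbase : D.base = G.base := rfl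
  -- trichotomy of edge indices
  have htri : ∀ e : ℕ, e ∈ G.ballE r ∨ (∃ j : ↥BD, ↑j = e) ∨ (∃ j d, em j d = e) := by
    intro e
    by_cases h1 : e ∈ G.ballE r
    · exact Or.inl h1
    by_cases h2 : e ∈ NB
    · exact Or.inr (Or.inl ⟨⟨e, h2, h1⟩, rfl⟩)
    · exact Or.inr (Or.inr (hem_surj e h2))
  -- adjacency and reachability in D
  have hadjL : ∀ (j : ↥BD) (c : ℕ), D.Adj (vm j c) (vm j (c+1)) := by
    intro j c
    obtain ⟨d, hd⟩ := lE_succ c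
    exact ⟨em j d, by rw [hDE, hDe3, hd, Sym2.map_pair_eq]⟩
  have hreachL : ∀ j c, D.ReachesIn c (vm j 0) (vm j c) :=
    fun j c => ⟨fun i => vm j i, rfl, rfl, fun i _ => hadjL j i⟩
  have hadjU : ∀ j : ↥BD, D.Adj (uu j) (vm j 0) :=
    fun j => ⟨↑j, by rw [hDE, hDe2]⟩
  have hreachB : ∀ v ∈ B, D.ReachesIn (G.dist G.base v) G.base v := by
    intro v hv
    obtain ⟨f, h0, hn, hs⟩ := reachesIn_dist (hGc G.base v)
    refine ⟨f, h0, hn, fun i hi => ?_⟩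
    have hvr : G.dist G.base v ≤ r := (hBmem v).mp hv
    have hfi : f i ∈ B := (hBmem _).mpr
      (le_trans (dist_le ⟨f, h0, rfl, fun k hk => hs k (by omega)⟩) (by omega))
    have hfi1 : f (i+1) ∈ B := (hBmem _).mpr
      (le_trans (dist_le ⟨f, h0, rfl, fun k hk => hs k (by omega)⟩) (by omega))
    obtain ⟨e, he⟩ := hs i hi
    have heB : e ∈ G.ballE r := by
      intro x hx
      rw [he, Sym2.mem_iff] at hx
      rcases hx with h | h
      · exact h ▸ hfi
      · exact h ▸ hfi1
    exact ⟨e, by rw [hDE, hDe1 e heB, he]⟩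
  have hDreachBase : ∀ v, ∃ m, D.ReachesIn m v G.base := by
    intro v
    by_cases hv : v ∈ B
    · exact ⟨_, reachesIn_symm (hreachB v hv)⟩
    · obtain ⟨j, c, rfl⟩ := hvm_surj v hv
      exact ⟨c + 1 + G.dist G.base (uu j), reachesIn_trans (reachesIn_trans
        (reachesIn_symm (hreachL j c)) (reachesIn_symm (adj_reachesIn (hadjU j))))
        (reachesIn_symm (hreachB (uu j) (huB j)))⟩
  have hDconn : D.Connected := by
    intro a b
    obtain ⟨m1, h1⟩ := hDreachBase a
    obtain ⟨m2, h2⟩ := hDreachBase b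
    exact ⟨m1 + m2, reachesIn_trans h1 (reachesIn_symm h2)⟩
  -- incidence sets for ball vertices
  have hincB : ∀ v ∈ B, {e | v ∈ De e} = {e | v ∈ G.edges e} := by
    intro v hv
    ext e
    rcases htri e with he | ⟨j, rfl⟩ | ⟨j, d, rfl⟩
    · rw [Set.mem_setOf_eq, Set.mem_setOf_eq, hDe1 e he]
    · rw [Set.mem_setOf_eq, Set.mem_setOf_eq, hDe2 j, hedge j, Sym2.mem_iff, Sym2.mem_iff]
      constructor
      · rintro (h | h)
        · exact Or.inl h
        · exact absurd (h ▸ hv) (hvmB j 0)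
      · rintro (h | h)
        · exact Or.inl h
        · exact absurd (h ▸ hv) (hwB j)
    · rw [Set.mem_setOf_eq, Set.mem_setOf_eq, hDe3 j d]
      constructor
      · intro h
        rw [Sym2.mem_map] at h
        obtain ⟨a, -, ha⟩ := h
        exact absurd (ha ▸ hv) (hvmB j a)
      · intro h
        exact absurd ⟨v, h, hv⟩ (hemN j d)
  have hloopB : ∀ v ∈ B, {e | De e = s(v, v)} = {e | G.edges e = s(v, v)} := by
    intro v hv
    ext e
    rcases htri e with he | ⟨j, rfl⟩ | ⟨j, d, rfl⟩
    · rw [Set.mem_setOf_eq, Set.mem_setOf_eq, hDe1 e he]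
    · rw [Set.mem_setOf_eq, Set.mem_setOf_eq, hDe2 j, hedge j, Sym2.eq_iff, Sym2.eq_iff]
      constructor
      · rintro (⟨-, h⟩ | ⟨-, h⟩) <;> exact absurd (h ▸ hv) (hvmB j 0)
      · rintro (⟨-, h⟩ | ⟨-, h⟩) <;> exact absurd (h ▸ hv) (hwB j)
    · rw [Set.mem_setOf_eq, Set.mem_setOf_eq, hDe3 j d]
      obtain ⟨x, hx⟩ := lE_consec d
      rw [hx, Sym2.map_pair_eq, Sym2.eq_iff]
      constructor
      · rintro (⟨h, -⟩ | ⟨-, h⟩) <;> exact absurd (h ▸ hv) (hvmB j _)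
      · intro h
        have hvm : v ∈ G.edges (em j d) := by rw [h, Sym2.mem_iff]; exact Or.inl rfl
        exact absurd ⟨v, hvm, hv⟩ (hemN j d)
  -- incidence characterization for ladder vertices
  have hchar : ∀ (j : ↥BD) (c : ℕ) (e : ℕ), (vm j c ∈ De e) ↔
      ((c = 0 ∧ e = ↑j) ∨ (∃ d, c ∈ lE d ∧ e = em j d)) := by
    intro j c e
    rcases htri e with he | ⟨j', rfl⟩ | ⟨j', d, rfl⟩
    · rw [hDe1 e he]
      constructor
      · intro h
        exact absurd (hmemB e he _ h) (hvmB j c)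
      · rintro (⟨-, rfl⟩ | ⟨d, -, rfl⟩)
        · exact absurd he (hBDnE _ j.2)
        · exact absurd (hballE_sub he) (hemN j d)
    · rw [hDe2 j', Sym2.mem_iff]
      constructor
      · rintro (h | h)
        · exact absurd (show vm j c ∈ B by rw [h]; exact huB j') (hvmB j c)
        · obtain ⟨hj, hc⟩ := hvm_inj _ _ _ _ h
          exact Or.inl ⟨hc, by rw [hj]⟩
      · rintro (⟨rfl, hj⟩ | ⟨d, -, hd⟩)
        · have : j = j' := Subtype.ext hj.symm
          subst this
          exact Or.inr rfl
        · exact absurd hd.symm (hem_ne_j j j' d)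
    · rw [hDe3 j' d, Sym2.mem_map]
      constructor
      · rintro ⟨a, ha, haeq⟩
        obtain ⟨hj, hc⟩ := hvm_inj _ _ _ _ haeq
        subst hj
        exact Or.inr ⟨d, hc ▸ ha, rfl⟩
      · rintro (⟨-, hj⟩ | ⟨d', hd', he'⟩)
        · exact absurd hj (hem_ne_j j' j d)
        · obtain ⟨hj, hdd⟩ := hem_inj _ _ _ _ he'
          exact ⟨c, by rw [hdd]; exact hd', by rw [hj]⟩
  have hloopL : ∀ (j : ↥BD) (c : ℕ), {e | De e = s(vm j c, vm j c)} = (∅ : Set ℕ) := by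
    intro j c
    ext e
    simp only [Set.mem_setOf_eq, Set.mem_empty_iff_false, iff_false]
    rcases htri e with he | ⟨j', rfl⟩ | ⟨j', d, rfl⟩
    · intro h
      rw [hDe1 e he] at h
      have : vm j c ∈ G.edges e := by rw [h, Sym2.mem_iff]; exact Or.inl rfl
      exact (hvmB j c) (hmemB e he _ this)
    · intro h
      rw [hDe2 j', Sym2.eq_iff] at h
      rcases h with ⟨h, -⟩ | ⟨h, -⟩ <;> exact (hvmB j c) (h ▸ huB j')
    · intro h
      rw [hDe3 j' d] at h
      obtain ⟨x, hx⟩ := lE_consec d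
      rw [hx, Sym2.map_pair_eq, Sym2.eq_iff] at h
      rcases h with ⟨h1, h2⟩ | ⟨h1, h2⟩ <;>
      · obtain ⟨-, hc1⟩ := hvm_inj _ _ _ _ h1
        obtain ⟨-, hc2⟩ := hvm_inj _ _ _ _ h2
        omega
  -- incidence sets for ladder vertices, explicitly
  have hincL0 : ∀ j : ↥BD, {e | vm j 0 ∈ De e} = {(↑j : ℕ), em j 0, em j 1} := by
    intro j
    ext e
    rw [Set.mem_setOf_eq, hchar j 0 e]
    simp only [Set.mem_insert_iff, Set.mem_singleton_iff]
    constructor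
    · rintro (⟨-, rfl⟩ | ⟨d, hd, rfl⟩)
      · exact Or.inl rfl
      · rw [lE_mem_zero_iff] at hd
        rcases hd with rfl | rfl
        · exact Or.inr (Or.inl rfl)
        · exact Or.inr (Or.inr rfl)
    · rintro (rfl | rfl | rfl)
      · exact Or.inl (by simp)
      · exact Or.inr ⟨0, (lE_mem_zero_iff 0).mpr (Or.inl rfl), rfl⟩
      · exact Or.inr ⟨1, (lE_mem_zero_iff 1).mpr (Or.inr rfl), rfl⟩
  have hincLodd : ∀ (j : ↥BD) (c : ℕ), c % 2 = 1 →
      {e | vm j c ∈ De e} = {em j (3*(c/2)), em j (3*(c/2)+1), em j (3*(c/2)+2)} := by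
    intro j c hc
    ext e
    rw [Set.mem_setOf_eq, hchar j c e]
    simp only [Set.mem_insert_iff, Set.mem_singleton_iff]
    constructor
    · rintro (⟨hc0, -⟩ | ⟨d, hd, rfl⟩)
      · omega
      · rw [lE_mem_odd_iff c d hc] at hd
        rcases hd with rfl | rfl | rfl
        · exact Or.inl rfl
        · exact Or.inr (Or.inl rfl)
        · exact Or.inr (Or.inr rfl)
    · rintro (rfl | rfl | rfl)
      · exact Or.inr ⟨_, (lE_mem_odd_iff c _ hc).mpr (Or.inl rfl), rfl⟩
      · exact Or.inr ⟨_, (lE_mem_odd_iff c _ hc).mpr (Or.inr (Or.inl rfl)), rfl⟩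
      · exact Or.inr ⟨_, (lE_mem_odd_iff c _ hc).mpr (Or.inr (Or.inr rfl)), rfl⟩
  have hincLeven : ∀ (j : ↥BD) (c : ℕ), c % 2 = 0 → c ≠ 0 →
      {e | vm j c ∈ De e} = {em j (3*(c/2)-1), em j (3*(c/2)), em j (3*(c/2)+1)} := by
    intro j c hc hc0
    ext e
    rw [Set.mem_setOf_eq, hchar j c e]
    simp only [Set.mem_insert_iff, Set.mem_singleton_iff]
    constructor
    · rintro (⟨hc', -⟩ | ⟨d, hd, rfl⟩)
      · exact absurd hc' hc0
      · rw [lE_mem_even_iff c d hc hc0] at hd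
        rcases hd with rfl | rfl | rfl
        · exact Or.inl rfl
        · exact Or.inr (Or.inl rfl)
        · exact Or.inr (Or.inr rfl)
    · rintro (rfl | rfl | rfl)
      · exact Or.inr ⟨_, (lE_mem_even_iff c _ hc hc0).mpr (Or.inl rfl), rfl⟩
      · exact Or.inr ⟨_, (lE_mem_even_iff c _ hc hc0).mpr (Or.inr (Or.inl rfl)), rfl⟩
      · exact Or.inr ⟨_, (lE_mem_even_iff c _ hc hc0).mpr (Or.inr (Or.inr rfl)), rfl⟩
  have hem_ne : ∀ (j : ↥BD) (d d' : ℕ), d ≠ d' → em j d ≠ em j d' :=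
    fun j d d' hne h => hne (hem_inj _ _ _ _ h).2
  have hdegD : ∀ v, {e | v ∈ De e}.ncard + {e | De e = s(v, v)}.ncard = 3 := by
    intro v
    by_cases hv : v ∈ B
    · rw [hincB v hv, hloopB v hv]
      exact hGdeg v
    · obtain ⟨j, c, rfl⟩ := hvm_surj v hv
      rw [hloopL j c, Set.ncard_empty, Nat.add_zero]
      by_cases hc0 : c = 0
      · subst hc0
        rw [hincL0 j]
        exact ncard_triple (fun h => hem_ne_j j j 0 h.symm)
          (fun h => hem_ne_j j j 1 h.symm) (hem_ne j 0 1 (by omega))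
      · rcases Nat.even_or_odd c with hc | hc
        · have hc' := Nat.even_iff.mp hc
          rw [hincLeven j c hc' hc0]
          have h1 : 1 ≤ c/2 := by omega
          exact ncard_triple (hem_ne j _ _ (by omega)) (hem_ne j _ _ (by omega))
            (hem_ne j _ _ (by omega))
        · have hc' := Nat.odd_iff.mp hc
          rw [hincLodd j c hc']
          exact ncard_triple (hem_ne j _ _ (by omega)) (hem_ne j _ _ (by omega))
            (hem_ne j _ _ (by omega))
  have hfinD : ∀ v, {e | v ∈ De e}.Finite := by
    intro v
    by_cases hv : v ∈ B
    · rw [hincB v hv]; exact hGlf v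
    · obtain ⟨j, c, rfl⟩ := hvm_surj v hv
      by_cases hc0 : c = 0
      · subst hc0; rw [hincL0 j]; exact Set.toFinite _
      · rcases Nat.even_or_odd c with hc | hc
        · rw [hincLeven j c (Nat.even_iff.mp hc) hc0]; exact Set.toFinite _
        · rw [hincLodd j c (Nat.odd_iff.mp hc)]; exact Set.toFinite _
  have hDreg : D.Regular 3 := ⟨fun v => hfinD v, fun v => hdegD v⟩
  -- the potential function and the ball comparison
  have hpotex : ∀ v, v ∉ B → ∀ j c, vm j c = v → True := fun _ _ _ _ _ => trivial
  set pot : ℕ → ℕ := fun v =>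
    if hv : v ∈ B then G.dist G.base v else r + 1 + (vE.symm ⟨v, hv⟩).2 with hpotdef
  have hpot_B : ∀ v (h : v ∈ B), pot v = G.dist G.base v := fun v h => dif_pos h
  have hpot_vm : ∀ j c, pot (vm j c) = r + 1 + c := by
    intro j c
    rw [hpotdef]
    simp only
    rw [dif_neg (hvmB j c)]
    congr 1
    show ((vE.symm (vE (j, c))).2) = c
    rw [vE.symm_apply_apply]
  have hpot_step : ∀ a b, D.Adj a b → pot b ≤ pot a + 1 := by
    rintro a b ⟨e, he⟩
    rw [hDE] at he
    rcases htri e with heB | ⟨j, rfl⟩ | ⟨j, d, rfl⟩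
    · rw [hDe1 e heB] at he
      have haB : a ∈ B := hmemB e heB a (by rw [he, Sym2.mem_iff]; exact Or.inl rfl)
      have hbB : b ∈ B := hmemB e heB b (by rw [he, Sym2.mem_iff]; exact Or.inr rfl)
      rw [hpot_B a haB, hpot_B b hbB]
      exact dist_le_adj hGc ⟨e, he⟩ G.base
    · rw [hDe2 j, Sym2.eq_iff] at he
      rcases he with ⟨h1, h2⟩ | ⟨h1, h2⟩
      · rw [← h1, ← h2, hpot_B _ (huB j), hpot_vm j 0, hu_dist j]
      · rw [← h1, ← h2, hpot_B _ (huB j), hpot_vm j 0, hu_dist j]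
        omega
    · rw [hDe3 j d] at he
      obtain ⟨x, hx⟩ := lE_consec d
      rw [hx, Sym2.map_pair_eq, Sym2.eq_iff] at he
      rcases he with ⟨h1, h2⟩ | ⟨h1, h2⟩ <;>
        rw [← h1, ← h2, hpot_vm, hpot_vm] <;> omega
  have hpot_walk : ∀ (f : ℕ → ℕ) (m : ℕ), f 0 = G.base →
      (∀ i < m, D.Adj (f i) (f (i+1))) → ∀ i, i ≤ m → pot (f i) ≤ i := by
    intro f m h0 hs i
    induction i with
    | zero =>
      intro _
      rw [h0, hpot_B _ hbase, RGD.dist_self]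
    | succ i ih =>
      intro hi
      have := hpot_step _ _ (hs i (by omega))
      have := ih (by omega)
      omega
  have hballV_eq : D.ballV r = B := by
    ext v
    constructor
    · intro hv
      obtain ⟨f, h0, hn, hs⟩ := reachesIn_dist (hDconn D.base v)
      have hple : pot v ≤ r := by
        have h1 := hpot_walk f (D.dist D.base v) h0 hs (D.dist D.base v) le_rfl
        rw [hn] at h1
        exact le_trans h1 hv
      by_contra hvB
      obtain ⟨j, c, rfl⟩ := hvm_surj v hvB
      rw [hpot_vm j c] at hple
      omega
    · intro hv
      exact le_trans (dist_le (hreachB v hv)) ((hBmem v).mp hv)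
  have hballE_eq : D.ballE r = G.ballE r := by
    ext e
    constructor
    · intro he
      rcases htri e with heB | ⟨j, rfl⟩ | ⟨j, d, rfl⟩
      · exact heB
      · exfalso
        have hm : vm j 0 ∈ D.edges ↑j := by
          rw [hDE, hDe2 j, Sym2.mem_iff]; exact Or.inr rfl
        have := he _ hm
        rw [hballV_eq] at this
        exact (hvmB j 0) this
      · exfalso
        obtain ⟨x, hx⟩ := lE_consec d
        have hm : vm j x ∈ D.edges (em j d) := by
          rw [hDE, hDe3 j d, hx, Sym2.map_pair_eq, Sym2.mem_iff]; exact Or.inl rfl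
        have := he _ hm
        rw [hballV_eq] at this
        exact (hvmB j x) this
    · intro he x hx
      rw [hDE, hDe1 e he] at hx
      rw [hballV_eq]
      exact hmemB e he x hx
  -- assemble
  refine ⟨⟨D, hDconn, hDreg⟩, ?_, ?_⟩
  · refine ⟨Equiv.setCongr (hballV_eq.symm : B = D.ballV r), Equiv.setCongr hballE_eq.symm,
      fun h₁ => rfl, ?_⟩
    rintro ⟨e, he⟩ ux vx hu hv hex
    show D.edges e = _
    rw [hDE, hDe1 e he, hex]
    rfl
  · rcases Nat.eq_zero_or_pos n with rfl | hn
    · exact ⟨∅, ∅, by simp, by simp, by simp⟩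
    obtain ⟨j⟩ := hBDni
    refine ⟨(Finset.range (2*n)).image (vm j), (Finset.range (3*n-1)).image (em j),
      by simp, ?_, ?_⟩
    · intro e he v hv
      simp only [Finset.mem_image, Finset.mem_range] at he
      obtain ⟨d, hd, rfl⟩ := he
      rw [show (⟨D, hDconn, hDreg⟩ : Gspace 3).1.edges = De from rfl, hDe3 j d,
        Sym2.mem_map] at hv
      obtain ⟨x, hx, rfl⟩ := hv
      simp only [Finset.mem_image, Finset.mem_range]
      exact ⟨x, lE_mem_lt hd hx, rfl⟩
    · rw [Finset.card_image_of_injective _ (fun a b h => (hvm_inj _ _ _ _ h).2),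
        Finset.card_image_of_injective _ (fun a b h => (hem_inj _ _ _ _ h).2),
        Finset.card_range, Finset.card_range]
      omega
end
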